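/- For every k, every constant c > 0 (used in the definition of Δ_rs), and every w > 0 there exist ε₀ > 0 and a constant c₀ such that the following holds. Suppose T_1,…,T_k is an optimal k-means clustering of the rows of A with n_r ≥ w·n for all r, Δ_k and Δ_{k−1} are the optimal k-means and (k−1)-means costs of the rows of A, and Δ_k ≤ ε·Δ_{k−1} for some 0 < ε ≤ ε₀. Then the number of points A_i that do not satisfy the proximity condition is at most c₀·ε·n. -/

import Mathlib

/-! Merging cluster `T r` into `T s` is a `(k-1)`-means solution of cost at most
`Δ_k + n_r |μ_r - μ_s|²`, so `Δ_k ≤ ε Δ_{k-1}` forces every pair of means to be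
`|μ_r - μ_s|² ≳ Δ_k / (ε n)` apart. Since `‖A - C‖ ≤ ‖A - C‖_F = √Δ_k` and `n_r ≥ w n`,
this is far more than `Δ_rs` once `ε` is small. A point violating the proximity condition
has a projection on the line `μ_r μ_s` at distance more than `|μ_r - μ_s| / 4` from `μ_r`,
hence contributes more than `Δ_k / (ε n)` (up to constants) to the cost `Δ_k`; there are
therefore `O(ε n)` such points. -/

open scoped BigOperators

noncomputable section

/-- Points of `ℝ^d` with the Euclidean norm. -/
abbrev Pt (d : ℕ) := EuclideanSpace ℝ (Fin d)

/-- The spectral (operator) norm of a real `n × d` matrix, viewed as a linear map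
between Euclidean spaces. -/
def specNorm {n d : ℕ} (M : Matrix (Fin n) (Fin d) ℝ) : ℝ :=
  ‖LinearMap.toContinuousLinearMap (Matrix.toEuclideanLin M)‖

/-- The `n × d` matrix whose `i`-th row is `p i - q i`. -/
def diffM {n d : ℕ} (p q : Fin n → Pt d) : Matrix (Fin n) (Fin d) ℝ :=
  Matrix.of fun i j => p i j - q i j

/-- The mean of the points `p i`, `i ∈ X`. -/
def fmean {n d : ℕ} (p : Fin n → Pt d) (X : Finset (Fin n)) : Pt d :=
  (X.card : ℝ)⁻¹ • ∑ i ∈ X, p i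

/-- The orthogonal projection of `x` onto the line through `a` and `b`. -/
def lineProj {d : ℕ} (a b x : Pt d) : Pt d :=
  a + ((inner ℝ (x - a) (b - a) : ℝ) / ‖b - a‖ ^ 2) • (b - a)

/-- The separation parameter `Δ_{rs} = (ck/√n_r + ck/√n_s)·‖A − C‖`. -/
def Dlt {n d k : ℕ} (c : ℝ) (A C : Fin n → Pt d) (T : Fin k → Finset (Fin n))
    (r s : Fin k) : ℝ :=
  (c * k / Real.sqrt (T r).card + c * k / Real.sqrt (T s).card) * specNorm (diffM A C)

/-- The proximity condition for the point `A i`: for every `s ≠ r`, where `T r` is the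
cluster of `i`, the projection of `A i` on the line through `μ r` and `μ s` is at least
`Δ_{rs}` closer to `μ r` than to `μ s`. -/
def ProxPt {n d k : ℕ} (c : ℝ) (A C : Fin n → Pt d) (T : Fin k → Finset (Fin n))
    (μ : Fin k → Pt d) (i : Fin n) : Prop :=
  ∀ r, i ∈ T r → ∀ s, s ≠ r →
    ‖lineProj (μ r) (μ s) (A i) - μ s‖ - ‖lineProj (μ r) (μ s) (A i) - μ r‖
      ≥ Dlt c A C T r s

/-- The Frobenius norm of a real matrix. -/
def frobNorm {n d : ℕ} (M : Matrix (Fin n) (Fin d) ℝ) : ℝ :=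
  Real.sqrt (∑ i, ∑ j, (M i j) ^ 2)

/-- The `k`-means cost of the points `p i` with centers `ν j`. -/
def kmeansCost {n d k : ℕ} (p : Fin n → Pt d) (ν : Fin k → Pt d) : ℝ :=
  ∑ i, ⨅ j, ‖p i - ν j‖ ^ 2

/-- The optimal `j`-means cost of the points `p i`. -/
def optCost {n d : ℕ} (p : Fin n → Pt d) (j : ℕ) : ℝ :=
  ⨅ ν : Fin j → Pt d, kmeansCost p ν

open Finset

lemma ncard_mul_lt_sum {ι : Type*} [Fintype ι] {f : ι → ℝ} (hf : ∀ i, 0 ≤ f i) {P : ι → Prop}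
    {a : ℝ} (hP : ∀ i, P i → a < f i) (hne : ∃ i, P i) : {i | P i}.ncard * a < ∑ i, f i := by
  classical
  rw [← coe_filter_univ, Set.ncard_coe_finset, ← nsmul_eq_mul, ← sum_const]
  obtain ⟨i, hi⟩ := hne
  calc ∑ _ ∈ univ.filter P, a < ∑ i ∈ univ.filter P, f i :=
        sum_lt_sum_of_nonempty ⟨i, by simpa using hi⟩ fun j hj => hP j (by simpa using hj)
    _ ≤ ∑ i, f i := sum_le_sum_of_subset_of_nonneg (subset_univ _) fun j _ _ => hf j

section Clustering

variable {n d : ℕ}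

lemma frobNorm_sq_diffM (p q : Fin n → Pt d) :
    frobNorm (diffM p q) ^ 2 = ∑ i, ‖p i - q i‖ ^ 2 := by
  rw [frobNorm, Real.sq_sqrt (by positivity)]
  refine sum_congr rfl fun i _ => ?_
  simp [EuclideanSpace.norm_sq_eq, diffM]

lemma specNorm_le_frobNorm (M : Matrix (Fin n) (Fin d) ℝ) : specNorm M ≤ frobNorm M := by
  refine ContinuousLinearMap.opNorm_le_bound _ (Real.sqrt_nonneg _) fun x => ?_
  rw [LinearMap.coe_toContinuousLinearMap', EuclideanSpace.norm_eq, EuclideanSpace.norm_eq,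
    frobNorm, ← Real.sqrt_mul (by positivity), sum_mul]
  refine Real.sqrt_le_sqrt (sum_le_sum fun i _ => ?_)
  simpa [Matrix.toLpLin_apply, Matrix.mulVec, dotProduct]
    using sum_mul_sq_le_sq_mul_sq univ (M i) x

lemma optCost_le_kmeansCost {j : ℕ} (p : Fin n → Pt d) (ν : Fin j → Pt d) :
    optCost p j ≤ kmeansCost p ν :=
  ciInf_le ⟨0, by
    rintro _ ⟨ν', rfl⟩
    exact sum_nonneg fun _ _ => Real.iInf_nonneg fun _ => sq_nonneg _⟩ ν

lemma optCost_le_sum_norm_sub_sq {j : ℕ} (p D : Fin n → Pt d) (s : Finset (Pt d))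
    (hs : #s ≤ j) (hD : ∀ i, D i ∈ s) : optCost p j ≤ ∑ i, ‖p i - D i‖ ^ 2 := by
  let ν : Fin j → Pt d := fun l => if h : l.val < #s then s.equivFin.symm ⟨l, h⟩ else 0
  refine (optCost_le_kmeansCost p ν).trans (sum_le_sum fun i _ => ?_)
  let l : Fin j := ⟨s.equivFin ⟨D i, hD i⟩, (Fin.is_lt _).trans_le hs⟩
  have hl : ν l = D i := by simp [ν, l]
  rw [← hl]
  exact ciInf_le ⟨0, by rintro _ ⟨l', rfl⟩; exact sq_nonneg _⟩ l

lemma sum_sub_fmean (p : Fin n → Pt d) (X : Finset (Fin n)) :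
    ∑ i ∈ X, (p i - fmean p X) = 0 := by
  rcases X.eq_empty_or_nonempty with rfl | hX
  · simp
  rw [sum_sub_distrib, sum_const, fmean, ← Nat.cast_smul_eq_nsmul ℝ, smul_smul,
    mul_inv_cancel₀ (by exact_mod_cast hX.card_pos.ne'), one_smul, sub_self]

lemma sum_norm_sub_sq_eq_add_card_mul (p : Fin n → Pt d) (X : Finset (Fin n)) (b : Pt d) :
    ∑ i ∈ X, ‖p i - b‖ ^ 2
      = ∑ i ∈ X, ‖p i - fmean p X‖ ^ 2 + #X * ‖fmean p X - b‖ ^ 2 := by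
  have hsplit : ∀ i, p i - b = (p i - fmean p X) + (fmean p X - b) := fun i => by abel
  simp_rw [hsplit, norm_add_sq_real, sum_add_distrib, ← mul_sum, ← sum_inner, sum_sub_fmean,
    inner_zero_left, sum_const, nsmul_eq_mul]
  ring

lemma optCost_pred_le_add_card_mul {k : ℕ} (A C : Fin n → Pt d) (T : Fin k → Finset (Fin n))
    (μ : Fin k → Pt d) (hcover : ∀ i, ∃ r, i ∈ T r) (hC : ∀ i r, i ∈ T r → C i = μ r)
    {r s : Fin k} (hmean : μ r = fmean A (T r)) (hsr : s ≠ r) :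
    optCost A (k - 1) ≤ ∑ i, ‖A i - C i‖ ^ 2 + #(T r) * ‖μ r - μ s‖ ^ 2 := by
  classical
  let D : Fin n → Pt d := fun i => if i ∈ T r then μ s else C i
  have hD : ∀ i, D i ∈ (univ.erase r).image μ := by
    intro i
    by_cases hi : i ∈ T r
    · simpa [D, hi] using ⟨s, hsr, rfl⟩
    · obtain ⟨t, ht⟩ := hcover i
      simpa [D, hi, hC i t ht] using ⟨t, fun h => hi (h ▸ ht), rfl⟩
  have hcard : #((univ.erase r).image μ) ≤ k - 1 :=
    card_image_le.trans (by simp [card_erase_of_mem])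
  refine (optCost_le_sum_norm_sub_sq A D _ hcard hD).trans_eq ?_
  have hin : ∑ i ∈ T r, ‖A i - D i‖ ^ 2 = ∑ i ∈ T r, ‖A i - μ s‖ ^ 2 :=
    sum_congr rfl fun i hi => by simp [D, hi]
  have hout : ∑ i ∈ (T r)ᶜ, ‖A i - D i‖ ^ 2 = ∑ i ∈ (T r)ᶜ, ‖A i - C i‖ ^ 2 :=
    sum_congr rfl fun i hi => by simp [D, mem_compl.mp hi]
  have hCr : ∑ i ∈ T r, ‖A i - C i‖ ^ 2 = ∑ i ∈ T r, ‖A i - μ r‖ ^ 2 :=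
    sum_congr rfl fun i hi => by rw [hC i r hi]
  rw [← sum_add_sum_compl (T r), ← sum_add_sum_compl (T r) fun i => ‖A i - C i‖ ^ 2, hin, hout,
    hCr, sum_norm_sub_sq_eq_add_card_mul A (T r) (μ s), hmean]
  ring

lemma norm_lineProj_sub_left_le (a b x : Pt d) : ‖lineProj a b x - a‖ ≤ ‖x - a‖ := by
  rw [lineProj, add_sub_cancel_left, norm_smul, Real.norm_eq_abs, abs_div, abs_sq]
  rcases (norm_nonneg (b - a)).eq_or_lt with h | h
  · simp [← h]
  rw [div_mul_eq_mul_div, div_le_iff₀ (by positivity)]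
  nlinarith [abs_real_inner_le_norm (x - a) (b - a)]

lemma div_four_lt_norm_sub_of_lineProj (a b x : Pt d) {δ : ℝ} (hδ : 2 * δ ≤ ‖b - a‖)
    (h : ‖lineProj a b x - b‖ - ‖lineProj a b x - a‖ < δ) : ‖b - a‖ / 4 < ‖x - a‖ := by
  have htri := norm_sub_le_norm_sub_add_norm_sub b (lineProj a b x) a
  rw [norm_sub_rev b (lineProj a b x)] at htri
  linarith [norm_lineProj_sub_left_le a b x]

lemma Dlt_le_mul_frobNorm {k : ℕ} (c : ℝ) (A C : Fin n → Pt d) (T : Fin k → Finset (Fin n))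
    {r s : Fin k} {m : ℝ} (hm : 0 < m) (hr : m ≤ #(T r)) (hs : m ≤ #(T s)) :
    Dlt c A C T r s ≤ 2 * |c| * k / √m * frobNorm (diffM A C) := by
  have hterm : ∀ t, m ≤ #(T t) → c * k / √(#(T t) : ℝ) ≤ |c| * k / √m := fun t ht =>
    calc c * k / √(#(T t) : ℝ) ≤ |c| * k / √(#(T t) : ℝ) := by
          gcongr; exact le_abs_self c
      _ ≤ |c| * k / √m := by gcongr
  calc Dlt c A C T r s ≤ 2 * |c| * k / √m * specNorm (diffM A C) := by
        rw [Dlt]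
        gcongr
        · exact norm_nonneg _
        · calc _ ≤ |c| * k / √m + |c| * k / √m := add_le_add (hterm r hr) (hterm s hs)
            _ = _ := by ring
    _ ≤ 2 * |c| * k / √m * frobNorm (diffM A C) := by
        gcongr
        exact specNorm_le_frobNorm _

lemma optCost_pred_sub_lt_of_not_proxPt {k : ℕ} {c w : ℝ} (hw : 0 < w)
    {A C : Fin n → Pt d} {T : Fin k → Finset (Fin n)} {μ : Fin k → Pt d}
    (hcover : ∀ i, ∃ r, i ∈ T r) (hmean : ∀ r, μ r = fmean A (T r))
    (hC : ∀ i r, i ∈ T r → C i = μ r) (hcard : ∀ r, w * n ≤ #(T r))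
    (hsep : 16 * c ^ 2 * k ^ 2 * frobNorm (diffM A C) ^ 2 / w
      ≤ optCost A (k - 1) - frobNorm (diffM A C) ^ 2)
    {i : Fin n} (hi : ¬ ProxPt c A C T μ i) :
    optCost A (k - 1) - frobNorm (diffM A C) ^ 2 < 16 * n * ‖A i - C i‖ ^ 2 := by
  simp only [ProxPt, not_forall, ge_iff_le, not_le] at hi
  obtain ⟨r, hir, s, hsr, hlt⟩ := hi
  have hn : (0 : ℝ) < n := Nat.cast_pos.mpr i.pos
  have hwn : 0 < w * n := mul_pos hw hn
  have hgap : optCost A (k - 1) - frobNorm (diffM A C) ^ 2 ≤ n * ‖μ s - μ r‖ ^ 2 := by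
    have hmerge := optCost_pred_le_add_card_mul A C T μ hcover hC (hmean r) hsr
    have hTr : (#(T r) : ℝ) ≤ n := by exact_mod_cast card_le_univ (T r) |>.trans_eq (by simp)
    rw [← frobNorm_sq_diffM, norm_sub_rev] at hmerge
    nlinarith [sq_nonneg ‖μ s - μ r‖]
  have hDlt : 2 * Dlt c A C T r s ≤ ‖μ s - μ r‖ := by
    refine (mul_le_mul_of_nonneg_left (Dlt_le_mul_frobNorm c A C T hwn (hcard r) (hcard s))
      zero_le_two).trans ?_
    have hF : 0 ≤ frobNorm (diffM A C) := Real.sqrt_nonneg _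
    refine (pow_le_pow_iff_left₀ (by positivity) (norm_nonneg _) two_ne_zero).mp ?_
    calc (2 * (2 * |c| * k / √(w * n) * frobNorm (diffM A C))) ^ 2
        = 16 * c ^ 2 * k ^ 2 * frobNorm (diffM A C) ^ 2 / w / n := by
          rw [mul_pow, mul_pow, div_pow, mul_pow, mul_pow, sq_abs, Real.sq_sqrt hwn.le]
          field_simp
          ring
      _ ≤ ‖μ s - μ r‖ ^ 2 := by
          rw [div_le_iff₀ hn]
          linarith
  have hfar := div_four_lt_norm_sub_of_lineProj (μ r) (μ s) (A i) hDlt hlt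
  have hsq : ‖μ s - μ r‖ ^ 2 < 16 * ‖A i - μ r‖ ^ 2 := by
    nlinarith [norm_nonneg (μ s - μ r)]
  rw [hC i r hir]
  nlinarith

end Clustering

theorem ORSS_condition_implies_proximity_for_most_points_general
    (k : ℕ) (c w : ℝ) (hw : 0 < w) :
    ∃ ε₀ : ℝ, 0 < ε₀ ∧ ∃ c₀ : ℝ,
    ∀ {n d : ℕ} (ε : ℝ) (A C : Fin n → Pt d) (T : Fin k → Finset (Fin n))
      (μ : Fin k → Pt d),
      (∀ i, ∃! r, i ∈ T r) →
      (∀ r, μ r = fmean A (T r)) →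
      (∀ i r, i ∈ T r → C i = μ r) →
      (∀ r, w * n ≤ ((T r).card : ℝ)) →
      frobNorm (diffM A C) ^ 2 = optCost A k →
      0 < ε → ε ≤ ε₀ →
      optCost A k ≤ ε * optCost A (k - 1) →
      (({i : Fin n | ¬ ProxPt c A C T μ i}.ncard : ℝ)) ≤ c₀ * ε * n := by
  set K := 16 * c ^ 2 * k ^ 2 / w with hK
  -- `ε ≤ 1 / (1 + K)` gives the separation `K Δ_k ≤ Δ_{k-1} - Δ_k`, and `ε ≤ 1 / 2` gives
  -- `Δ_k ≤ 2 ε (Δ_{k-1} - Δ_k)`, which turns the count into `32 ε n`.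
  refine ⟨min (1 / 2) (1 / (1 + K)), by positivity, 32, ?_⟩
  intro n d ε A C T μ hpart hmean hC hcard hfrob hε hεle hopt
  set S := frobNorm (diffM A C) ^ 2
  set G := optCost A (k - 1) - S
  have hε2 : 2 * ε ≤ 1 := by linarith [min_le_left (1 / 2 : ℝ) (1 / (1 + K))]
  have hεK : ε * (1 + K) ≤ 1 :=
    (le_div_iff₀ (by positivity)).mp (by simpa using hεle.trans (min_le_right _ _))
  have hS : 0 ≤ S := by positivity
  have hεG : S ≤ ε * (S + G) := by simpa [G, ← hfrob] using hopt
  have hsep : 16 * c ^ 2 * k ^ 2 * S / w ≤ G := by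
    rw [mul_div_right_comm, ← hK]
    nlinarith [mul_nonneg hS (show 0 ≤ K by positivity)]
  have hbad : ∀ i, ¬ ProxPt c A C T μ i → G < 16 * n * ‖A i - C i‖ ^ 2 := fun _ hi =>
    optCost_pred_sub_lt_of_not_proxPt hw (fun i => (hpart i).exists) hmean hC hcard hsep hi
  have hG : 0 ≤ G := le_trans (by positivity) hsep
  have hSG : S ≤ 2 * ε * G := by nlinarith [mul_nonneg (sub_nonneg.2 hε2) hS]
  by_contra! hlt
  have hne : ∃ i, ¬ ProxPt c A C T μ i := by
    by_contra! hall
    simp only [hall, not_true_eq_false, Set.ofPred_false, Set.ncard_empty, Nat.cast_zero] at hlt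
    linarith [show 0 ≤ 32 * ε * n by positivity]
  have hcount := ncard_mul_lt_sum (fun i => by positivity) hbad hne
  rw [← mul_sum, ← frobNorm_sq_diffM] at hcount
  nlinarith

theorem ORSS_condition_implies_proximity_for_most_points
    (k : ℕ) (c w : ℝ) (hc : 0 < c) (hw : 0 < w) :
    ∃ ε₀ : ℝ, 0 < ε₀ ∧ ∃ c₀ : ℝ,
    ∀ {n d : ℕ} (ε : ℝ) (A C : Fin n → Pt d) (T : Fin k → Finset (Fin n))
      (μ : Fin k → Pt d),
      (∀ i, ∃! r, i ∈ T r) →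
      (∀ r, μ r = fmean A (T r)) →
      (∀ i r, i ∈ T r → C i = μ r) →
      (∀ r, w * n ≤ ((T r).card : ℝ)) →
      frobNorm (diffM A C) ^ 2 = optCost A k →
      0 < ε → ε ≤ ε₀ →
      optCost A k ≤ ε * optCost A (k - 1) →
      (({i : Fin n | ¬ ProxPt c A C T μ i}.ncard : ℝ)) ≤ c₀ * ε * n :=
  ORSS_condition_implies_proximity_for_most_points_general k c w hw
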